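/- Let q be a probability measure on a measurable space Ω, let f₁,…,f_k : Ω → ℝ be measurable functions, and let λ₁,…,λ_k ∈ ℝ be such that Z = ∫ exp(∑_{t=1}^k λ_t f_t) dq < ∞. Let p* be the probability measure with density exp(∑_{t=1}^k λ_t f_t)/Z with respect to q, and assume each f_t is p*-integrable. Then for every probability measure p that is absolutely continuous with respect to q, such that each f_t is p-integrable and ∫ f_t dp = ∫ f_t dp* for all t ∈ {1,…,k}, one has KL(p‖q) ≥ KL(p*‖q). In other words, p* maximizes the relative entropy −KL(·‖q) among all probability measures satisfying the given expectation constraints. -/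

import Mathlib

/-! The tilted measure `q_F = q.tilted F`, `F = ∑ λ_t f_t`, has log-likelihood ratio
`F - log Z` against `q`, so `KL(q_F‖q) = ∫ F dq_F - log Z`. For any other `p`,
`KL(p‖q) = KL(p‖q_F) + ∫ F dp - log Z ≥ ∫ F dp - log Z` by Gibbs' inequality (this is the
Donsker–Varadhan bound), and the moment constraints give `∫ F dp = ∫ F dq_F`. -/

open MeasureTheory Real
open scoped Classical

/-- Kullback–Leibler divergence `KL(p‖q) = ∫ log (dp/dq) dp`, valued in `ℝ≥0∞`:
it is the integral of the log of the Radon–Nikodym derivative when `p ≪ q` and this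
log-likelihood ratio is `p`-integrable, and `∞` otherwise. -/
noncomputable def klDiv {Ω : Type*} [MeasurableSpace Ω] (p q : Measure Ω) : ENNReal :=
  if p ≪ q ∧ Integrable (fun x => Real.log (p.rnDeriv q x).toReal) p
  then ENNReal.ofReal (∫ x, Real.log (p.rnDeriv q x).toReal ∂p)
  else ⊤

section

variable {Ω : Type*} [MeasurableSpace Ω] {μ ν : Measure Ω} {f : Ω → ℝ}

/-- Mathlib's `klDiv` carries the correction term `ν.real univ - μ.real univ`, which vanishes
for measures of equal mass. -/
lemma klDiv_eq_informationTheory_klDiv (h : μ Set.univ = ν Set.univ) :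
    klDiv μ ν = InformationTheory.klDiv μ ν := by
  have h_real : ν.real Set.univ = μ.real Set.univ := by simp only [measureReal_def, h]
  unfold klDiv
  split_ifs with hc
  · rw [InformationTheory.klDiv_of_ac_of_integrable hc.1 hc.2, h_real, add_sub_cancel_right]
    rfl
  · exact (InformationTheory.klDiv_eq_top_iff.mpr fun hac hint => hc ⟨hac, hint⟩).symm

lemma klDiv_tilted_left_self [IsProbabilityMeasure μ] (hf : Integrable f (μ.tilted f))
    (hexp : Integrable (fun x => exp (f x)) μ) :
    InformationTheory.klDiv (μ.tilted f) μ
      = ENNReal.ofReal (∫ x, f x ∂μ.tilted f - log (∫ x, exp (f x) ∂μ)) := by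
  have := isProbabilityMeasure_tilted hexp
  have h_llr : llr (μ.tilted f) μ =ᵐ[μ.tilted f] fun x => f x - log (∫ x, exp (f x) ∂μ) :=
    (tilted_absolutelyContinuous μ f).ae_le (log_rnDeriv_tilted_left_self hexp)
  have h_int : Integrable (llr (μ.tilted f) μ) (μ.tilted f) :=
    (hf.sub (integrable_const _)).congr h_llr.symm
  rw [InformationTheory.klDiv_of_ac_of_integrable (tilted_absolutelyContinuous μ f) h_int,
    integral_congr_ae h_llr, integral_sub hf (integrable_const _)]
  simp

lemma ofReal_integral_sub_log_integral_exp_le_klDiv [IsProbabilityMeasure μ]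
    [IsProbabilityMeasure ν] (hf : Integrable f μ) (hexp : Integrable (fun x => exp (f x)) ν) :
    ENNReal.ofReal (∫ x, f x ∂μ - log (∫ x, exp (f x) ∂ν)) ≤ InformationTheory.klDiv μ ν := by
  by_cases hc : μ ≪ ν ∧ Integrable (llr μ ν) μ
  swap
  · rw [InformationTheory.klDiv_eq_top_iff.mpr fun hac hint => hc ⟨hac, hint⟩]
    exact le_top
  obtain ⟨hμν, h_int⟩ := hc
  have := isProbabilityMeasure_tilted hexp
  have gibbs : 0 ≤ ∫ x, llr μ (ν.tilted f) x ∂μ := by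
    simpa using InformationTheory.integral_llr_add_sub_measure_univ_nonneg
      (hμν.trans (absolutelyContinuous_tilted hexp))
      (integrable_llr_tilted_right hμν hf h_int hexp)
  rw [integral_llr_tilted_right hμν hf hexp h_int] at gibbs
  rw [InformationTheory.klDiv_of_ac_of_integrable hμν h_int]
  refine ENNReal.ofReal_le_ofReal ?_
  simp only [probReal_univ, add_sub_cancel_right]
  linarith

end

theorem maxEnt_tilted_minimizes_klDiv_general
    {Ω : Type*} [MeasurableSpace Ω] (q : Measure Ω) [IsProbabilityMeasure q]
    (k : ℕ) (f : Fin k → Ω → ℝ)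
    (lam : Fin k → ℝ)
    (hZ : Integrable (fun ω => Real.exp (∑ t, lam t * f t ω)) q)
    (pstar : Measure Ω)
    (hpstar : pstar = q.tilted (fun ω => ∑ t, lam t * f t ω))
    (hfint : ∀ t, Integrable (f t) pstar) :
    ∀ p : Measure Ω, IsProbabilityMeasure p → p ≪ q →
      (∀ t, Integrable (f t) p) →
      (∀ t, ∫ ω, f t ω ∂p = ∫ ω, f t ω ∂pstar) →
      klDiv pstar q ≤ klDiv p q := by
  intro p hp _ hfp hconstr
  have : IsProbabilityMeasure pstar := hpstar ▸ isProbabilityMeasure_tilted hZ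
  have h_mean : ∫ ω, ∑ t, lam t * f t ω ∂p = ∫ ω, ∑ t, lam t * f t ω ∂pstar := by
    rw [integral_finsetSum _ fun t _ => (hfp t).const_mul _,
      integral_finsetSum _ fun t _ => (hfint t).const_mul _]
    simp only [integral_const_mul, hconstr]
  have hF_star : Integrable (fun ω => ∑ t, lam t * f t ω) pstar :=
    integrable_finsetSum _ fun t _ => (hfint t).const_mul _
  rw [klDiv_eq_informationTheory_klDiv (by simp), klDiv_eq_informationTheory_klDiv (by simp),
    hpstar, klDiv_tilted_left_self (hpstar ▸ hF_star) hZ, ← hpstar, ← h_mean]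
  exact ofReal_integral_sub_log_integral_exp_le_klDiv
    (integrable_finsetSum _ fun t _ => (hfp t).const_mul _) hZ

/-- The exponentially tilted measure `p* = exp(∑ λ_t f_t)/Z · q` maximizes relative entropy
(minimizes `KL(·‖q)`) among all probability measures `p ≪ q` matching the expectations of
the `f_t` under `p*`. -/
theorem maxEnt_tilted_minimizes_klDiv
    {Ω : Type*} [MeasurableSpace Ω] (q : Measure Ω) [IsProbabilityMeasure q]
    (k : ℕ) (f : Fin k → Ω → ℝ) (hf : ∀ t, Measurable (f t))
    (lam : Fin k → ℝ)
    (hZ : Integrable (fun ω => Real.exp (∑ t, lam t * f t ω)) q)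
    (pstar : Measure Ω)
    (hpstar : pstar = q.tilted (fun ω => ∑ t, lam t * f t ω))
    (hfint : ∀ t, Integrable (f t) pstar) :
    ∀ p : Measure Ω, IsProbabilityMeasure p → p ≪ q →
      (∀ t, Integrable (f t) p) →
      (∀ t, ∫ ω, f t ω ∂p = ∫ ω, f t ω ∂pstar) →
      klDiv pstar q ≤ klDiv p q :=
  maxEnt_tilted_minimizes_klDiv_general q k f lam hZ pstar hpstar hfint
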